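/- Let (y, λ) ∈ ℝ^Q × ℝ₊ with (y, λ) ∉ H, and let x⋆ be a solution of (P_λ(y)) with D-support I, D-cosupport J and s = sign(D* x⋆). Suppose (H_J) holds. For (ȳ, λ̄) ∈ ℝ^Q × ℝ₊ define x̂(ȳ, λ̄) = A^[J] Φ* ȳ − λ̄ A^[J] D_I s_I. Then there exists an open neighborhood B ⊆ ℝ^Q × ℝ₊ of (y, λ) such that for every (ȳ, λ̄) ∈ B, the vector x̂(ȳ, λ̄) is a solution of (P_{λ̄}(ȳ)). -/

import Mathlib

open Matrix MeasureTheory ProbabilityTheory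

/-- The analysis lasso objective `L_{y,λ}(x) = (1/2)‖y − Φx‖₂² + λ‖D*x‖₁`. -/
noncomputable def lassoObj {N Q P : ℕ} (Φ : Matrix (Fin Q) (Fin N) ℝ)
    (D : Matrix (Fin N) (Fin P) ℝ) (y : Fin Q → ℝ) (lam : ℝ) (x : Fin N → ℝ) : ℝ :=
  (1 / 2) * ∑ i, (y i - Φ.mulVec x i) ^ 2 + lam * ∑ j, |Dᵀ.mulVec x j|

/-- `x` is a solution of `(P_λ(y))`, i.e. a global minimizer of the lasso objective. -/
def IsLassoSol {N Q P : ℕ} (Φ : Matrix (Fin Q) (Fin N) ℝ)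
    (D : Matrix (Fin N) (Fin P) ℝ) (y : Fin Q → ℝ) (lam : ℝ) (x : Fin N → ℝ) : Prop :=
  ∀ x' : Fin N → ℝ, lassoObj Φ D y lam x ≤ lassoObj Φ D y lam x'

/-- The cospace `G_J = Ker D_J^*`. -/
def GJ {N P : ℕ} (D : Matrix (Fin N) (Fin P) ℝ) (J : Set (Fin P)) :
    Submodule ℝ (Fin N → ℝ) where
  carrier := {x | ∀ j ∈ J, Dᵀ.mulVec x j = 0}
  add_mem' := by
    intro a b ha hb j hj
    simp [Matrix.mulVec_add, ha j hj, hb j hj]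
  zero_mem' := by intro j hj; simp
  smul_mem' := by
    intro c a ha j hj
    simp [Matrix.mulVec_smul, ha j hj]

/-- Condition `(H_J)`: `Ker Φ ∩ G_J = {0}`. -/
def HJcond {N Q P : ℕ} (Φ : Matrix (Fin Q) (Fin N) ℝ) (D : Matrix (Fin N) (Fin P) ℝ)
    (J : Set (Fin P)) : Prop :=
  ∀ x : Fin N → ℝ, Φ.mulVec x = 0 → x ∈ GJ D J → x = 0

/-- The columns of `U` form a basis of the subspace `G`. -/
def ColBasis {N r : ℕ} (U : Matrix (Fin N) (Fin r) ℝ) (G : Submodule ℝ (Fin N → ℝ)) : Prop :=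
  LinearIndependent ℝ (fun k : Fin r => (fun i => U i k)) ∧
  Submodule.span ℝ (Set.range (fun k : Fin r => (fun i => U i k))) = G

/-- The matrix `A^[J] = U (U* Φ* Φ U)⁻¹ U*` built from a basis matrix `U` of `G_J`. -/
noncomputable def AJmat {N Q r : ℕ} (Φ : Matrix (Fin Q) (Fin N) ℝ)
    (U : Matrix (Fin N) (Fin r) ℝ) : Matrix (Fin N) (Fin N) ℝ :=
  U * (Uᵀ * Φᵀ * Φ * U)⁻¹ * Uᵀ

/-- Orthogonal projection onto a subspace of `Fin n → ℝ` (Euclidean inner product). -/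
noncomputable def projG {n : ℕ} (G : Submodule ℝ (Fin n → ℝ)) (v : Fin n → ℝ) : Fin n → ℝ :=
  (EuclideanSpace.equiv (Fin n) ℝ)
    (Submodule.orthogonalProjection
      (G.map ((EuclideanSpace.equiv (Fin n) ℝ).symm.toLinearEquiv :
          (Fin n → ℝ) →ₗ[ℝ] EuclideanSpace ℝ (Fin n)))
      ((EuclideanSpace.equiv (Fin n) ℝ).symm v))

/-- `AJ` is a valid assignment of the matrix `A^[J]` to each `J` satisfying `(H_J)`;
the value of `A^[J]` does not depend on the choice of basis matrix `U`. -/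
def IsAJChoice {N Q P : ℕ} (Φ : Matrix (Fin Q) (Fin N) ℝ) (D : Matrix (Fin N) (Fin P) ℝ)
    (AJ : Set (Fin P) → Matrix (Fin N) (Fin N) ℝ) : Prop :=
  ∀ J : Set (Fin P), HJcond Φ D J →
    ∃ (r : ℕ) (U : Matrix (Fin N) (Fin r) ℝ), ColBasis U (GJ D J) ∧ AJ J = AJmat Φ U

/-- `Im D_S`: the span of the columns of `D` indexed by `S`, as a set of vectors. -/
def colSpan {N P : ℕ} (D : Matrix (Fin N) (Fin P) ℝ) (S : Set (Fin P)) : Set (Fin N → ℝ) :=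
  {w | ∃ v : Fin P → ℝ, (∀ i, i ∉ S → v i = 0) ∧ w = D.mulVec v}

/-- The transition space `H ⊆ ℝ^Q × ℝ₊`: union over `J` satisfying `(H_J)`, `K ⊆ J` with
`Im Π̃^[J] ⊄ Im D_{J∖K}`, and sign vectors `s` on `J^c` and `σ` on `K`, of the sets where
`Proj_{G_{J∖K}}(Π̃^[J] y) = Proj_{G_{J∖K}}(λ(C̃^[J] s_{J^c} − D_K σ_K))`. -/
noncomputable def transitionSpace {N Q P : ℕ} (Φ : Matrix (Fin Q) (Fin N) ℝ)
    (D : Matrix (Fin N) (Fin P) ℝ) (AJ : Set (Fin P) → Matrix (Fin N) (Fin N) ℝ) :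
    Set ((Fin Q → ℝ) × ℝ) :=
  {p | 0 ≤ p.2 ∧
    ∃ (J K : Set (Fin P)) (s σ : Fin P → ℝ),
      HJcond Φ D J ∧ K ⊆ J ∧
      ¬ (Set.range (Φᵀ * (Φ * AJ J * Φᵀ - 1)).mulVec ⊆ colSpan D (J \ K)) ∧
      (∀ i, i ∉ J → s i = 1 ∨ s i = -1) ∧ (∀ i ∈ J, s i = 0) ∧
      (∀ i ∈ K, σ i = 1 ∨ σ i = -1) ∧ (∀ i, i ∉ K → σ i = 0) ∧
      projG (GJ D (J \ K)) ((Φᵀ * (Φ * AJ J * Φᵀ - 1)).mulVec p.1)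
        = projG (GJ D (J \ K))
            (p.2 • ((Φᵀ * Φ * AJ J - 1).mulVec (D.mulVec s) - D.mulVec σ))}


/-!
At a solution `x⋆`, optimality yields a dual certificate `u`: a subgradient of `‖·‖₁` at
`D* x⋆` with `Φ*(Φ x⋆ − y) + λ D u = 0` (Hahn–Banach separation, fed by the one-sided
directional derivatives of the objective). As `Φ` is injective on `G_J ∋ x⋆`, projecting the
certificate equation on `G_J` gives `x⋆ = x̂(y, λ)`. The residual `Φ*(Φ x̂ − ȳ) + λ̄ D s` equals
`Π̃ ȳ − λ̄ C̃ s`, affine in `(ȳ, λ̄)`.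

Let `K ⊆ J` be the indices where `|u| = 1`. The point `(y, λ)` always satisfies the equation of
the stratum `H_{J,K,s,u_K}`: its two sides differ by `λ D w` with `w` supported on `J ∖ K`, which
is orthogonal to `G_{J∖K}`. So `(y, λ) ∉ H` forces `Im Π̃ ⊆ Im D_{J∖K}`, and the change of
residual at `(ȳ, λ̄)` is absorbed by a correction of `u` supported on `J ∖ K`, linear in
`λ⁻¹ y − λ̄⁻¹ ȳ` and hence small near `(y, λ)`. There `|u_j| < 1` on `J ∖ K` survives the
correction and `x̂` keeps the signs of `x⋆` on `I`, so the corrected `u` certifies `x̂(ȳ, λ̄)`.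
-/

open Filter Topology

namespace Real

lemma sign_mul_self_eq_abs (r : ℝ) : sign r * r = |r| := by
  rcases lt_trichotomy r 0 with h | rfl | h
  · rw [sign_of_neg h, abs_of_neg h]; ring
  · simp
  · rw [sign_of_pos h, abs_of_pos h]; ring

lemma abs_sign_le_one (r : ℝ) : |sign r| ≤ 1 := by
  rcases sign_apply_eq r with h | h | h <;> simp [h]

end Real

lemma abs_add_eq_abs_add_sign_mul {a δ : ℝ} (h : |δ| ≤ |a|) :
    |a + δ| = |a| + Real.sign a * δ := by
  obtain ⟨h₁, h₂⟩ := abs_le.1 h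
  rcases lt_trichotomy a 0 with ha | rfl | ha
  · rw [Real.sign_of_neg ha, abs_of_neg ha, abs_of_nonpos (by linarith [abs_of_neg ha])]; ring
  · simp_all
  · rw [Real.sign_of_pos ha, abs_of_pos ha, abs_of_nonneg (by linarith [abs_of_pos ha])]; ring

lemma eventually_abs_add_mul (a b : ℝ) :
    ∀ᶠ t in 𝓝[>] (0 : ℝ),
      |a + t * b| = |a| + t * (Real.sign a * b + if a = 0 then |b| else 0) := by
  by_cases ha : a = 0
  · filter_upwards [self_mem_nhdsWithin] with t (ht : 0 < t)
    simp [ha, abs_mul, abs_of_pos ht]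
  · have hsmall : ∀ᶠ t in 𝓝 (0 : ℝ), |t * b| < |a| :=
      (continuous_id.mul continuous_const).abs.continuousAt.eventually_lt
        continuousAt_const (by simpa using ha)
    filter_upwards [hsmall.filter_mono nhdsWithin_le_nhds] with t ht
    rw [abs_add_eq_abs_add_sign_mul ht.le, if_neg ha]
    ring

lemma nonneg_of_eventually_nonneg_mul_add_sq {E c : ℝ}
    (h : ∀ᶠ t in 𝓝[>] (0 : ℝ), 0 ≤ t * E + t ^ 2 * c) : 0 ≤ E := by
  have hlin : ∀ᶠ t in 𝓝[>] (0 : ℝ), 0 ≤ E + t * c := by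
    filter_upwards [h, self_mem_nhdsWithin] with t h (ht : 0 < t)
    exact nonneg_of_mul_nonneg_right (by linarith) ht
  have hlim : Tendsto (fun t : ℝ => E + t * c) (𝓝[>] 0) (𝓝 E) :=
    ((continuous_const.add (continuous_id.mul continuous_const)).tendsto' 0 E
      (by simp)).mono_left nhdsWithin_le_nhds
  exact ge_of_tendsto hlim hlin

lemma mem_of_forall_exists_dotProduct_le {ι : Type*} [Fintype ι] [DecidableEq ι]
    {C : Set (ι → ℝ)} (hconv : Convex ℝ C) (hclosed : IsClosed C) {z : ι → ℝ}
    (h : ∀ v, ∃ c ∈ C, z ⬝ᵥ v ≤ c ⬝ᵥ v) : z ∈ C := by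
  by_contra hz
  obtain ⟨f, s, hfC, hfz⟩ := geometric_hahn_banach_closed_point hconv hclosed hz
  have hf : ∀ w, f w = w ⬝ᵥ fun i => f (Pi.single i 1) := fun w => by
    conv_lhs => rw [pi_eq_sum_univ' w]
    simp only [map_sum, map_smul, dotProduct, smul_eq_mul]
  obtain ⟨c, hc, hle⟩ := h fun i => f (Pi.single i 1)
  linarith [hfC c hc, hf c, hf z]

lemma mulVec_dotProduct_eq_dotProduct_transpose_mulVec {m n : Type*} [Fintype m] [Fintype n]
    (A : Matrix m n ℝ) (v : n → ℝ) (w : m → ℝ) : A *ᵥ v ⬝ᵥ w = v ⬝ᵥ Aᵀ *ᵥ w := by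
  rw [dotProduct_transpose_mulVec, dotProduct_comm]

section L1Subgradient

variable {ι : Type*}

def IsL1Subgradient (a u : ι → ℝ) : Prop :=
  ∀ i, |u i| ≤ 1 ∧ u i * a i = |a i|

variable {a u : ι → ℝ}

lemma IsL1Subgradient.abs_add_mul_le (hu : IsL1Subgradient a u) (i : ι) (b : ℝ) :
    |a i| + u i * (b - a i) ≤ |b| := by
  have hub : u i * b ≤ |b| :=
    (le_abs_self _).trans (by rw [abs_mul]; exact mul_le_of_le_one_left (abs_nonneg b) (hu i).1)
  linarith [(hu i).2]

lemma IsL1Subgradient.eq_sign (hu : IsL1Subgradient a u) {i : ι} (hi : a i ≠ 0) :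
    u i = Real.sign (a i) :=
  mul_right_cancel₀ hi ((hu i).2.trans (Real.sign_mul_self_eq_abs _).symm)

lemma IsL1Subgradient.abs_eq_one (hu : IsL1Subgradient a u) {i : ι} (hi : a i ≠ 0) :
    |u i| = 1 := by
  rcases Real.sign_apply_eq_of_ne_zero _ hi with h | h <;> simp [hu.eq_sign hi, h]

lemma eventually_isL1Subgradient_add {X : Type*} [TopologicalSpace X] [Finite ι] {p₀ : X}
    {a v : X → ι → ℝ} {S : Set ι} (hu : IsL1Subgradient (a p₀) u)
    (ha : ContinuousAt a p₀) (hzero : ∀ p i, a p₀ i = 0 → a p i = 0)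
    (hv : Tendsto v (𝓝 p₀) (𝓝 0)) (hvS : ∀ p, ∀ i ∉ S, v p i = 0)
    (hS : ∀ i ∈ S, |u i| < 1) : ∀ᶠ p in 𝓝 p₀, IsL1Subgradient (a p) (u + v p) := by
  refine eventually_all.2 fun i => ?_
  by_cases hai : a p₀ i = 0
  · by_cases hi : i ∈ S
    · have hvi : ∀ᶠ p in 𝓝 p₀, |v p i| < 1 - |u i| :=
        (((continuous_apply i).tendsto 0).comp hv).abs.eventually_lt_const
          (by simpa using hS i hi)
      filter_upwards [hvi] with p hp
      exact ⟨(abs_add_le _ _).trans (by linarith), by simp [hzero p i hai]⟩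
    · exact Eventually.of_forall fun p => by simp [hvS p i hi, hzero p i hai, (hu i).1]
  · have hi : i ∉ S := fun hi => (hS i hi).ne (hu.abs_eq_one hai)
    have hpos : ∀ᶠ p in 𝓝 p₀, 0 < u i * a p i :=
      (((continuous_apply i).continuousAt.comp ha).const_mul (u i)).eventually_const_lt
        (by simpa [(hu i).2] using hai)
    filter_upwards [hpos] with p hp
    refine ⟨by simpa [hvS p i hi] using (hu i).1, ?_⟩
    rw [Pi.add_apply, hvS p i hi, add_zero, ← abs_of_pos hp, abs_mul, hu.abs_eq_one hai, one_mul]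

end L1Subgradient

section Optimality

variable {N Q P : ℕ} {Φ : Matrix (Fin Q) (Fin N) ℝ} {D : Matrix (Fin N) (Fin P) ℝ}
  {y : Fin Q → ℝ} {lam : ℝ} {x : Fin N → ℝ}

def IsLassoCertificate (Φ : Matrix (Fin Q) (Fin N) ℝ) (D : Matrix (Fin N) (Fin P) ℝ)
    (y : Fin Q → ℝ) (lam : ℝ) (x : Fin N → ℝ) (u : Fin P → ℝ) : Prop :=
  Φᵀ *ᵥ (Φ *ᵥ x - y) + lam • D *ᵥ u = 0 ∧ IsL1Subgradient (Dᵀ *ᵥ x) u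

theorem IsLassoCertificate.isLassoSol {u : Fin P → ℝ} (h : IsLassoCertificate Φ D y lam x u)
    (hlam : 0 ≤ lam) : IsLassoSol Φ D y lam x := by
  intro x'
  obtain ⟨heq, hsub⟩ := h
  have hquad : ∀ i, (y i - (Φ *ᵥ x) i) ^ 2 + 2 * ((Φ *ᵥ x - y) i * (Φ *ᵥ (x' - x)) i)
      ≤ (y i - (Φ *ᵥ x') i) ^ 2 := fun i => by
    simp only [mulVec_sub, Pi.sub_apply]
    nlinarith [sq_nonneg ((Φ *ᵥ x') i - (Φ *ᵥ x) i)]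
  have hl1 : ∀ j, |(Dᵀ *ᵥ x) j| + u j * (Dᵀ *ᵥ (x' - x)) j ≤ |(Dᵀ *ᵥ x') j| := fun j => by
    simpa only [mulVec_sub, Pi.sub_apply] using hsub.abs_add_mul_le j ((Dᵀ *ᵥ x') j)
  have horth : (Φ *ᵥ x - y) ⬝ᵥ Φ *ᵥ (x' - x) + lam * (u ⬝ᵥ Dᵀ *ᵥ (x' - x)) = 0 := by
    have := congrArg (· ⬝ᵥ (x' - x)) heq
    simp only [add_dotProduct, smul_dotProduct, zero_dotProduct, smul_eq_mul] at this
    rwa [mulVec_dotProduct_eq_dotProduct_transpose_mulVec,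
      mulVec_dotProduct_eq_dotProduct_transpose_mulVec, transpose_transpose] at this
  have hq := Finset.sum_le_sum fun i (_ : i ∈ Finset.univ) => hquad i
  have hl := mul_le_mul_of_nonneg_left (Finset.sum_le_sum fun j (_ : j ∈ Finset.univ) => hl1 j)
    hlam
  simp only [Finset.sum_add_distrib, ← Finset.mul_sum] at hq hl
  unfold lassoObj
  simp only [dotProduct] at horth
  nlinarith

theorem IsLassoSol.directional_nonneg (hx : IsLassoSol Φ D y lam x) (h : Fin N → ℝ) :
    0 ≤ (Φ *ᵥ x - y) ⬝ᵥ Φ *ᵥ h + lam * ∑ j, (Real.sign ((Dᵀ *ᵥ x) j) * (Dᵀ *ᵥ h) j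
      + if (Dᵀ *ᵥ x) j = 0 then |(Dᵀ *ᵥ h) j| else 0) := by
  apply nonneg_of_eventually_nonneg_mul_add_sq (c := (1 / 2) * ∑ i, (Φ *ᵥ h) i ^ 2)
  have hl1 : ∀ᶠ t in 𝓝[>] (0 : ℝ), ∀ j, |(Dᵀ *ᵥ (x + t • h)) j| = |(Dᵀ *ᵥ x) j|
      + t * (Real.sign ((Dᵀ *ᵥ x) j) * (Dᵀ *ᵥ h) j
        + if (Dᵀ *ᵥ x) j = 0 then |(Dᵀ *ᵥ h) j| else 0) := by
    refine eventually_all.2 fun j => ?_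
    simpa only [mulVec_add, mulVec_smul, Pi.add_apply, Pi.smul_apply, smul_eq_mul]
      using eventually_abs_add_mul ((Dᵀ *ᵥ x) j) ((Dᵀ *ᵥ h) j)
  have hquad : ∀ t : ℝ, ∀ i, (y i - (Φ *ᵥ (x + t • h)) i) ^ 2 = (y i - (Φ *ᵥ x) i) ^ 2
      + 2 * t * ((Φ *ᵥ x - y) i * (Φ *ᵥ h) i) + t ^ 2 * (Φ *ᵥ h) i ^ 2 := fun t i => by
    simp only [mulVec_add, mulVec_smul, Pi.add_apply, Pi.smul_apply, Pi.sub_apply, smul_eq_mul]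
    ring
  filter_upwards [hl1] with t ht
  have hmin := hx (x + t • h)
  simp only [lassoObj, ht, hquad, Finset.sum_add_distrib, ← Finset.mul_sum] at hmin
  simp only [dotProduct, Finset.sum_add_distrib]
  linarith

theorem IsLassoSol.exists_certificate (hx : IsLassoSol Φ D y lam x) :
    ∃ u, IsLassoCertificate Φ D y lam x u := by
  set a := Dᵀ *ᵥ x
  set s : Fin P → ℝ := fun j => Real.sign (a j)
  set box : Set (Fin P → ℝ) := Set.univ.pi fun j => if a j = 0 then Set.Icc (-1) 1 else {0}
  have hbox_compact : IsCompact box := isCompact_univ_pi fun j => by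
    split_ifs
    exacts [isCompact_Icc, isCompact_singleton]
  have hbox_convex : Convex ℝ box := convex_pi fun j _ => by
    split_ifs
    exacts [convex_Icc _ _, convex_singleton _]
  -- the admissible certificates are `s + w` with `w ∈ box`
  obtain ⟨w, hw, hweq⟩ : -(Φᵀ *ᵥ (Φ *ᵥ x - y) + lam • D *ᵥ s) ∈ (lam • D).mulVecLin '' box := by
    refine mem_of_forall_exists_dotProduct_le (hbox_convex.linear_image _)
      (hbox_compact.image (LinearMap.continuous_of_finiteDimensional _)).isClosed fun h => ?_
    refine ⟨_, ⟨fun j => if a j = 0 then Real.sign ((Dᵀ *ᵥ h) j) else 0, ?_, rfl⟩, ?_⟩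
    · refine Set.mem_univ_pi.2 fun j => ?_
      split_ifs
      exacts [abs_le.1 (Real.abs_sign_le_one _), rfl]
    · have hdir := hx.directional_nonneg h
      simp only [mulVecLin_apply, smul_mulVec, neg_dotProduct, add_dotProduct,
        smul_dotProduct, smul_eq_mul, mulVec_dotProduct_eq_dotProduct_transpose_mulVec,
        transpose_transpose] at hdir ⊢
      simp only [dotProduct, Finset.sum_add_distrib] at hdir ⊢
      have hsign : ∑ j, (if a j = 0 then Real.sign ((Dᵀ *ᵥ h) j) else 0) * (Dᵀ *ᵥ h) j
          = ∑ j, if a j = 0 then |(Dᵀ *ᵥ h) j| else 0 :=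
        Finset.sum_congr rfl fun j _ => by split_ifs <;> simp [Real.sign_mul_self_eq_abs]
      rw [hsign]
      linarith
  refine ⟨s + w, ?_, fun j => ?_⟩
  · rw [mulVecLin_apply, smul_mulVec] at hweq
    rw [mulVec_add, smul_add, ← add_assoc, hweq, add_neg_cancel]
  · have hwj := Set.mem_univ_pi.1 hw j
    by_cases haj : a j = 0
    · rw [if_pos haj] at hwj
      have haj' : (Dᵀ *ᵥ x) j = 0 := haj
      simp [s, haj, haj', abs_le.2 hwj]
    · rw [if_neg haj, Set.mem_singleton_iff] at hwj
      simp only [Pi.add_apply, hwj, add_zero]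
      exact ⟨Real.abs_sign_le_one _, Real.sign_mul_self_eq_abs _⟩

end Optimality

lemma mulVec_dotProduct_eq_zero_of_mem_GJ {N P : ℕ} {D : Matrix (Fin N) (Fin P) ℝ}
    {S : Set (Fin P)} {w : Fin P → ℝ} (hw : ∀ j ∉ S, w j = 0) {g : Fin N → ℝ}
    (hg : g ∈ GJ D S) : D *ᵥ w ⬝ᵥ g = 0 := by
  rw [mulVec_dotProduct_eq_dotProduct_transpose_mulVec]
  refine Finset.sum_eq_zero fun j _ => ?_
  by_cases hj : j ∈ S
  · simp [show (Dᵀ *ᵥ g) j = 0 from hg j hj]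
  · simp [hw j hj]

lemma projG_eq_of_forall_dotProduct_eq_zero {n : ℕ} {G : Submodule ℝ (Fin n → ℝ)}
    {v w : Fin n → ℝ} (h : ∀ g ∈ G, (v - w) ⬝ᵥ g = 0) : projG G v = projG G w := by
  unfold projG
  congr 1
  rw [← sub_eq_zero, ← Submodule.coe_sub, ← map_sub, ← map_sub, Submodule.coe_eq_zero]
  apply Submodule.orthogonalProjectionOnto_apply_of_mem_orthogonal
  rw [Submodule.mem_orthogonal]
  rintro _ ⟨g, hg, rfl⟩
  simpa [EuclideanSpace.inner_eq_star_dotProduct, dotProduct_comm] using h g hg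

section ColBasis

variable {N Q r : ℕ} {Φ : Matrix (Fin Q) (Fin N) ℝ} {U : Matrix (Fin N) (Fin r) ℝ}
  {G : Submodule ℝ (Fin N → ℝ)}

lemma ColBasis.range_mulVecLin (hU : ColBasis U G) : LinearMap.range U.mulVecLin = G := by
  rw [Matrix.range_mulVecLin]
  exact hU.2

lemma ColBasis.mulVec_mem (hU : ColBasis U G) (a : Fin r → ℝ) : U *ᵥ a ∈ G :=
  hU.range_mulVecLin ▸ LinearMap.mem_range_self U.mulVecLin a

lemma ColBasis.exists_mulVec_eq (hU : ColBasis U G) {x : Fin N → ℝ} (hx : x ∈ G) :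
    ∃ a, U *ᵥ a = x := by
  rwa [← hU.range_mulVecLin] at hx

lemma ColBasis.isUnit_gram (hU : ColBasis U G) (hΦ : ∀ x ∈ G, Φ *ᵥ x = 0 → x = 0) :
    IsUnit (Uᵀ * Φᵀ * Φ * U) := by
  have hgram : Uᵀ * Φᵀ * Φ * U = (Φ * U)ᵀ * (Φ * U) := by
    simp only [transpose_mul, Matrix.mul_assoc]
  have hker : LinearMap.ker ((Φ * U)ᵀ * (Φ * U)).mulVecLin = ⊥ := by
    rw [ker_mulVecLin_transpose_mul_self, LinearMap.ker_eq_bot']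
    intro a ha
    rw [mulVecLin_apply, ← mulVec_mulVec] at ha
    exact Matrix.mulVec_injective_iff.2 hU.1
      ((hΦ _ (hU.mulVec_mem a) ha).trans (mulVec_zero U).symm)
  rw [hgram, ← mulVec_injective_iff_isUnit]
  exact LinearMap.ker_eq_bot.1 hker

lemma ColBasis.AJmat_mulVec_mem (hU : ColBasis U G) (z : Fin N → ℝ) : AJmat Φ U *ᵥ z ∈ G := by
  rw [AJmat, Matrix.mul_assoc, ← mulVec_mulVec]
  exact hU.mulVec_mem _

lemma ColBasis.AJmat_mulVec_gram (hU : ColBasis U G) (hΦ : ∀ x ∈ G, Φ *ᵥ x = 0 → x = 0)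
    {x : Fin N → ℝ} (hx : x ∈ G) : AJmat Φ U *ᵥ (Φᵀ *ᵥ (Φ *ᵥ x)) = x := by
  obtain ⟨a, rfl⟩ := hU.exists_mulVec_eq hx
  have hinv := nonsing_inv_mul _ ((isUnit_iff_isUnit_det _).1 (hU.isUnit_gram hΦ))
  have hprod : AJmat Φ U * Φᵀ * Φ * U = U := by
    simp only [AJmat, Matrix.mul_assoc] at hinv ⊢
    rw [hinv, Matrix.mul_one]
  rw [mulVec_mulVec, mulVec_mulVec, mulVec_mulVec, hprod]

lemma ColBasis.AJmat_mulVec_eq_zero (hU : ColBasis U G) {z : Fin N → ℝ}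
    (hz : ∀ g ∈ G, z ⬝ᵥ g = 0) : AJmat Φ U *ᵥ z = 0 := by
  have hUz : Uᵀ *ᵥ z = 0 := by
    ext k
    change (fun i => U i k) ⬝ᵥ z = 0
    rw [dotProduct_comm]
    exact hz _ (hU.2 ▸ Submodule.subset_span ⟨k, rfl⟩)
  rw [AJmat, ← mulVec_mulVec, hUz, mulVec_zero]

end ColBasis

lemma ColBasis.AJmat_affine_eq_of_certificate {N Q P r : ℕ} {Φ : Matrix (Fin Q) (Fin N) ℝ}
    {D : Matrix (Fin N) (Fin P) ℝ} {J : Set (Fin P)} {U : Matrix (Fin N) (Fin r) ℝ}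
    (hU : ColBasis U (GJ D J)) (hHJ : HJcond Φ D J) {y : Fin Q → ℝ} {lam : ℝ}
    {xs : Fin N → ℝ} (hxs : xs ∈ GJ D J) {s u : Fin P → ℝ}
    (hcert : Φᵀ *ᵥ (Φ *ᵥ xs - y) + lam • D *ᵥ u = 0) (hus : ∀ i ∉ J, u i = s i) :
    AJmat Φ U *ᵥ (Φᵀ *ᵥ y) - lam • AJmat Φ U *ᵥ (D *ᵥ s) = xs := by
  have hw : ∀ j ∉ J, (u - s) j = 0 := fun j hj => sub_eq_zero.2 (hus j hj)
  have hsplit : Φᵀ *ᵥ y - lam • D *ᵥ s = Φᵀ *ᵥ (Φ *ᵥ xs) + lam • D *ᵥ (u - s) := by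
    rw [mulVec_sub D, mulVec_sub Φᵀ] at *
    linear_combination (norm := module) -hcert
  rw [← mulVec_smul, ← mulVec_sub, hsplit, mulVec_add, hU.AJmat_mulVec_gram
    (fun x hx h0 => hHJ x h0 hx) hxs, mulVec_smul, hU.AJmat_mulVec_eq_zero
    (fun g hg => mulVec_dotProduct_eq_zero_of_mem_GJ hw hg), smul_zero, add_zero]

lemma exists_mul_eq_of_range_subset_colSpan {N P : ℕ} {ι : Type*} [Fintype ι] [DecidableEq ι]
    {D : Matrix (Fin N) (Fin P) ℝ} {S : Set (Fin P)} {B : Matrix (Fin N) ι ℝ}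
    (h : Set.range B.mulVec ⊆ colSpan D S) :
    ∃ R : Matrix (Fin P) ι ℝ, D * R = B ∧ ∀ i ∉ S, ∀ q, R i q = 0 := by
  choose v hvS hv using fun q => h ⟨Pi.single q 1, rfl⟩
  refine ⟨of fun i q => v q i, ?_, fun i hi q => hvS q i hi⟩
  ext i q
  simpa [mul_apply, mulVec, dotProduct, Pi.single_apply] using (congrFun (hv q) i).symm

lemma lasso_residual_affine_eq {N Q : ℕ} (Φ : Matrix (Fin Q) (Fin N) ℝ) (A : Matrix (Fin N) (Fin N) ℝ)
    (w : Fin N → ℝ) (z : Fin Q → ℝ) (μ : ℝ) :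
    Φᵀ *ᵥ (Φ *ᵥ (A *ᵥ (Φᵀ *ᵥ z) - μ • A *ᵥ w) - z) + μ • w
      = (Φᵀ * (Φ * A * Φᵀ - 1)) *ᵥ z - μ • (Φᵀ * Φ * A - 1) *ᵥ w := by
  simp only [mulVec_sub, mulVec_smul, sub_mulVec, Matrix.mul_sub, Matrix.mul_one, one_mulVec,
    mulVec_mulVec, Matrix.mul_assoc]
  module

section AffineCertificate

variable {N Q P : ℕ} {Φ : Matrix (Fin Q) (Fin N) ℝ} {D : Matrix (Fin N) (Fin P) ℝ}
  {A : Matrix (Fin N) (Fin N) ℝ} {y : Fin Q → ℝ} {lam : ℝ} {s u : Fin P → ℝ}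

lemma lasso_residual_eq_of_certificate {xs : Fin N → ℝ}
    (hxs : A *ᵥ (Φᵀ *ᵥ y) - lam • A *ᵥ (D *ᵥ s) = xs)
    (hcert : Φᵀ *ᵥ (Φ *ᵥ xs - y) + lam • D *ᵥ u = 0) :
    (Φᵀ * (Φ * A * Φᵀ - 1)) *ᵥ y - lam • (Φᵀ * Φ * A - 1) *ᵥ (D *ᵥ s)
      = lam • D *ᵥ (s - u) := by
  rw [← lasso_residual_affine_eq, hxs, mulVec_sub D, smul_sub]
  linear_combination (norm := module) hcert

variable {R : Matrix (Fin P) (Fin Q) ℝ}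

lemma lasso_residual_add_perturbation_eq_zero
    (hbase : (Φᵀ * (Φ * A * Φᵀ - 1)) *ᵥ y - lam • (Φᵀ * Φ * A - 1) *ᵥ (D *ᵥ s)
      = lam • D *ᵥ (s - u))
    (hDR : D * R = Φᵀ * (Φ * A * Φᵀ - 1)) (hlam : lam ≠ 0) {z : Fin Q → ℝ} {μ : ℝ}
    (hμ : μ ≠ 0) :
    Φᵀ *ᵥ (Φ *ᵥ (A *ᵥ (Φᵀ *ᵥ z) - μ • A *ᵥ (D *ᵥ s)) - z)
      + μ • D *ᵥ (u + R *ᵥ (lam⁻¹ • y - μ⁻¹ • z)) = 0 := by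
  have hres := lasso_residual_affine_eq Φ A (D *ᵥ s) z μ
  have hbase' := congrArg (lam⁻¹ • ·) hbase
  simp only [smul_sub, smul_smul, inv_mul_cancel₀ hlam, one_smul, mulVec_sub] at hbase'
  rw [mulVec_add, mulVec_mulVec _ D R, hDR, mulVec_sub (Φᵀ * _), mulVec_smul (Φᵀ * _),
    mulVec_smul (Φᵀ * _), smul_add, smul_sub, smul_smul, smul_smul, mul_inv_cancel₀ hμ, one_smul]
  linear_combination (norm := module) hres + μ • hbase'

theorem eventually_isLassoCertificate_affine {J : Set (Fin P)} {xs : Fin N → ℝ}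
    (hbase : (Φᵀ * (Φ * A * Φᵀ - 1)) *ᵥ y - lam • (Φᵀ * Φ * A - 1) *ᵥ (D *ᵥ s)
      = lam • D *ᵥ (s - u))
    (hDR : D * R = Φᵀ * (Φ * A * Φᵀ - 1)) (hA : ∀ z, A *ᵥ z ∈ GJ D J) (hlam : 0 < lam)
    (hxs : A *ᵥ (Φᵀ *ᵥ y) - lam • A *ᵥ (D *ᵥ s) = xs) (hJ : ∀ i, (Dᵀ *ᵥ xs) i = 0 → i ∈ J)
    (hu : IsL1Subgradient (Dᵀ *ᵥ xs) u)
    (hR : ∀ i ∉ J \ {j | j ∈ J ∧ |u j| = 1}, ∀ q, R i q = 0) :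
    ∀ᶠ p in 𝓝 (y, lam), 0 < p.2 ∧ IsLassoCertificate Φ D p.1 p.2
      (A *ᵥ (Φᵀ *ᵥ p.1) - p.2 • A *ᵥ (D *ᵥ s)) (u + R *ᵥ (lam⁻¹ • y - p.2⁻¹ • p.1)) := by
  set xhat : (Fin Q → ℝ) × ℝ → Fin N → ℝ :=
    fun p => A *ᵥ (Φᵀ *ᵥ p.1) - p.2 • A *ᵥ (D *ᵥ s)
  have hxhat : xhat (y, lam) = xs := hxs
  have hv : ContinuousAt (fun p : (Fin Q → ℝ) × ℝ => R *ᵥ (lam⁻¹ • y - p.2⁻¹ • p.1))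
      (y, lam) := by
    fun_prop (disch := exact hlam.ne')
  have hsub : ∀ᶠ p in 𝓝 (y, lam),
      IsL1Subgradient (Dᵀ *ᵥ xhat p) (u + R *ᵥ (lam⁻¹ • y - p.2⁻¹ • p.1)) :=
    eventually_isL1Subgradient_add (a := fun p => Dᵀ *ᵥ xhat p)
      (S := J \ {j | j ∈ J ∧ |u j| = 1}) (by rwa [hxhat])
      (by fun_prop) (fun p i hi => Submodule.sub_mem _ (hA _) (Submodule.smul_mem _ _ (hA _)) i
        (hJ i (by rwa [hxhat] at hi)))
      (by simpa using hv.tendsto) (fun p i hi => by simp [mulVec, dotProduct, hR i hi])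
      fun i hi => (hu i).1.lt_of_ne fun h => hi.2 ⟨hi.1, h⟩
  filter_upwards [continuousAt_const.eventually_lt continuous_snd.continuousAt hlam, hsub]
    with p hp hsubp
  exact ⟨hp, lasso_residual_add_perturbation_eq_zero hbase hDR hlam.ne' hp.ne', hsubp⟩

end AffineCertificate

theorem range_subset_colSpan_of_notMem_transitionSpace {N Q P : ℕ}
    {Φ : Matrix (Fin Q) (Fin N) ℝ} {D : Matrix (Fin N) (Fin P) ℝ}
    {AJ : Set (Fin P) → Matrix (Fin N) (Fin N) ℝ} {J : Set (Fin P)} (hHJ : HJcond Φ D J)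
    {y : Fin Q → ℝ} {lam : ℝ} (hlam : 0 ≤ lam) (hyH : (y, lam) ∉ transitionSpace Φ D AJ)
    {s u : Fin P → ℝ} (hs_off : ∀ i ∉ J, s i = 1 ∨ s i = -1) (hs_on : ∀ i ∈ J, s i = 0)
    (hus : ∀ i ∉ J, u i = s i)
    (hbase : (Φᵀ * (Φ * AJ J * Φᵀ - 1)) *ᵥ y - lam • (Φᵀ * Φ * AJ J - 1) *ᵥ (D *ᵥ s)
      = lam • D *ᵥ (s - u)) :
    Set.range (Φᵀ * (Φ * AJ J * Φᵀ - 1)).mulVec ⊆ colSpan D (J \ {j | j ∈ J ∧ |u j| = 1}) := by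
  set K := {j | j ∈ J ∧ |u j| = 1}
  by_contra hrange
  refine hyH ⟨hlam, J, K, s, K.indicator u, hHJ, fun j hj => hj.1, hrange, hs_off, hs_on,
    fun i hi => ?_, fun i hi => Set.indicator_of_notMem hi u, ?_⟩
  · rw [Set.indicator_of_mem hi]
    exact (abs_eq zero_le_one).1 hi.2
  · refine projG_eq_of_forall_dotProduct_eq_zero fun g hg => ?_
    have hw : ∀ j ∉ J \ K, (s - u + K.indicator u) j = 0 := fun j hj => by
      by_cases hjJ : j ∈ J
      · have hjK : j ∈ K := by_contra fun h => hj ⟨hjJ, h⟩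
        simp [hs_on j hjJ, Set.indicator_of_mem hjK]
      · simp [hus j hjJ, Set.indicator_of_notMem (fun h : j ∈ K => hjJ h.1)]
    have hdiff : (Φᵀ * (Φ * AJ J * Φᵀ - 1)) *ᵥ y
        - lam • ((Φᵀ * Φ * AJ J - 1) *ᵥ (D *ᵥ s) - D *ᵥ K.indicator u)
        = lam • D *ᵥ (s - u + K.indicator u) := by
      rw [mulVec_add, smul_add, ← hbase, smul_sub]
      abel
    rw [hdiff, smul_dotProduct, mulVec_dotProduct_eq_zero_of_mem_GJ hw hg, smul_zero]

theorem lasso_local_affine_parameterization_general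
    {N Q P : ℕ}
    (Φ : Matrix (Fin Q) (Fin N) ℝ) (D : Matrix (Fin N) (Fin P) ℝ)
    (AJ : Set (Fin P) → Matrix (Fin N) (Fin N) ℝ) (hAJ : IsAJChoice Φ D AJ)
    (y : Fin Q → ℝ) (lam : ℝ) (hlam : 0 < lam)
    (hyH : (y, lam) ∉ transitionSpace Φ D AJ)
    (xs : Fin N → ℝ) (hxs : IsLassoSol Φ D y lam xs)
    (J : Set (Fin P)) (hJ : J = {j | Dᵀ.mulVec xs j = 0})
    (hHJ : HJcond Φ D J) :
    ∃ B : Set ((Fin Q → ℝ) × ℝ), IsOpen B ∧ (y, lam) ∈ B ∧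
      ∀ p ∈ B, 0 ≤ p.2 →
        IsLassoSol Φ D p.1 p.2
          ((AJ J).mulVec (Φᵀ.mulVec p.1)
            - p.2 • (AJ J).mulVec (D.mulVec (fun i => Real.sign (Dᵀ.mulVec xs i)))) := by
  obtain ⟨r, U, hU, hAJJ⟩ := hAJ J hHJ
  obtain ⟨u, hcert, hu⟩ := hxs.exists_certificate
  set s : Fin P → ℝ := fun i => Real.sign ((Dᵀ *ᵥ xs) i)
  have hmemJ : ∀ i, i ∈ J ↔ (Dᵀ *ᵥ xs) i = 0 := fun i => by rw [hJ]; rfl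
  have hus : ∀ i ∉ J, u i = s i := fun i hi => hu.eq_sign ((hmemJ i).not.1 hi)
  have hxs_eq : AJ J *ᵥ (Φᵀ *ᵥ y) - lam • AJ J *ᵥ (D *ᵥ s) = xs := hAJJ ▸
    hU.AJmat_affine_eq_of_certificate hHJ (fun j hj => (hmemJ j).1 hj) hcert hus
  have hbase := lasso_residual_eq_of_certificate hxs_eq hcert
  obtain ⟨R, hDR, hR⟩ := exists_mul_eq_of_range_subset_colSpan <|
    range_subset_colSpan_of_notMem_transitionSpace hHJ hlam.le hyH
      (fun i hi => (Real.sign_apply_eq_of_ne_zero _ ((hmemJ i).not.1 hi)).symm)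
      (fun i hi => by simp [(hmemJ i).1 hi]) hus hbase
  obtain ⟨B, hB, hBopen, hyB⟩ := eventually_nhds_iff.1 <|
    eventually_isLassoCertificate_affine hbase hDR (fun z => hAJJ ▸ hU.AJmat_mulVec_mem z) hlam
      hxs_eq (fun i => (hmemJ i).2) hu hR
  exact ⟨B, hBopen, hyB, fun p hp _ => (hB p hp).2.isLassoSol (hB p hp).1.le⟩

/-- Local affine parameterization: for `(y, λ) ∉ H` and a solution `x⋆` of `(P_λ(y))`
with cosupport `J` satisfying `(H_J)`, the map
`(ȳ, λ̄) ↦ A^[J] Φ* ȳ − λ̄ A^[J] D_I s_I` yields solutions of `(P_{λ̄}(ȳ))` on an open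
neighborhood of `(y, λ)` in `ℝ^Q × ℝ₊`. -/
theorem lasso_local_affine_parameterization
    {N Q P : ℕ} (hN : 0 < N) (hQ : 0 < Q) (hP : 0 < P)
    (Φ : Matrix (Fin Q) (Fin N) ℝ) (D : Matrix (Fin N) (Fin P) ℝ)
    (hH0 : ∀ x : Fin N → ℝ, Φ.mulVec x = 0 → Dᵀ.mulVec x = 0 → x = 0)
    (AJ : Set (Fin P) → Matrix (Fin N) (Fin N) ℝ) (hAJ : IsAJChoice Φ D AJ)
    (y : Fin Q → ℝ) (lam : ℝ) (hlam : 0 < lam)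
    (hyH : (y, lam) ∉ transitionSpace Φ D AJ)
    (xs : Fin N → ℝ) (hxs : IsLassoSol Φ D y lam xs)
    (J : Set (Fin P)) (hJ : J = {j | Dᵀ.mulVec xs j = 0})
    (hHJ : HJcond Φ D J) :
    ∃ B : Set ((Fin Q → ℝ) × ℝ), IsOpen B ∧ (y, lam) ∈ B ∧
      ∀ p ∈ B, 0 ≤ p.2 →
        IsLassoSol Φ D p.1 p.2
          ((AJ J).mulVec (Φᵀ.mulVec p.1)
            - p.2 • (AJ J).mulVec (D.mulVec (fun i => Real.sign (Dᵀ.mulVec xs i)))) :=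
  lasso_local_affine_parameterization_general Φ D AJ hAJ y lam hlam hyH xs hxs J hJ hHJ
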